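/- arXiv:2211.05769 — 8 statements merged into one kernel-verified Lean document; each statement's English description precedes it below -/
import Mathlib

section
/- If two extreme sets X and Y cross (i.e., X∩Y, X\Y, and Y\X are all nonempty), then at least one of X\Y or Y\X contains no terminal. -/
variable {V : Type*}

def IsSteinerCut (T X : Set V) : Prop := (X ∩ T).Nonempty ∧ ¬ T ⊆ X

def SteinerExtreme (d : Set V → ℝ) (T X : Set V) : Prop :=
  IsSteinerCut T X ∧ ∀ Y, IsSteinerCut T Y → Y ⊂ X → d X < d Y

def Crosses (X Y : Set V) : Prop :=
  (X ∩ Y).Nonempty ∧ (X \ Y).Nonempty ∧ (Y \ X).Nonempty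

/-! If both `X \ Y` and `Y \ X` contain terminals, each is a Steiner cut strictly inside an
extreme set, so `d (X \ Y) > d X` and `d (Y \ X) > d Y`, contradicting posimodularity. -/

lemma isSteinerCut_sdiff {T X Y : Set V} (hXY : ((X \ Y) ∩ T).Nonempty)
    (hYX : ((Y \ X) ∩ T).Nonempty) : IsSteinerCut T (X \ Y) := by
  obtain ⟨t, ⟨htY, htX⟩, htT⟩ := hYX
  exact ⟨hXY, fun hT => (hT htT).2 htY⟩

lemma SteinerExtreme.lt_sdiff {d : Set V → ℝ} {T X Y : Set V} (hX : SteinerExtreme d T X)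
    (hXY : IsSteinerCut T (X \ Y)) (hinter : (X ∩ Y).Nonempty) : d X < d (X \ Y) :=
  hX.2 _ hXY (Set.sdiff_ssubset_left_iff.2 hinter)

theorem extreme_cross_difference_no_terminal_general (d : Set V → ℝ) (T X Y : Set V)
    (hpos : ∀ A B : Set V, d (A \ B) + d (B \ A) ≤ d A + d B)
    (hX : SteinerExtreme d T X) (hY : SteinerExtreme d T Y) (hc : Crosses X Y) :
    (X \ Y) ∩ T = ∅ ∨ (Y \ X) ∩ T = ∅ := by
  by_contra! h
  obtain ⟨hXY, hYX⟩ := h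
  have hX_lt := hX.lt_sdiff (isSteinerCut_sdiff hXY hYX) hc.1
  have hY_lt := hY.lt_sdiff (isSteinerCut_sdiff hYX hXY) (Set.inter_comm X Y ▸ hc.1)
  linarith [hpos X Y]

/-- If two extreme sets cross, then at least one of `X \ Y` or `Y \ X`
contains no terminal. -/
theorem extreme_cross_difference_no_terminal [Fintype V] (d : Set V → ℝ) (T X Y : Set V)
    (hpos : ∀ A B : Set V, d (A \ B) + d (B \ A) ≤ d A + d B)
    (hX : SteinerExtreme d T X) (hY : SteinerExtreme d T Y) (hc : Crosses X Y) :
    (X \ Y) ∩ T = ∅ ∨ (Y \ X) ∩ T = ∅ :=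
  extreme_cross_difference_no_terminal_general d T X Y hpos hX hY hc
end

section
/- For any extreme sets X and Y with X ∩ Y nonempty, X ∩ Y is a Steiner cut. -/
variable {V : Type*}

/-!
If `X ∩ Y` contained no terminal, the terminals of `X` would all lie in `X \ Y` and those of `Y`
in `Y \ X`, so both differences would be Steiner cuts properly contained in the extreme sets
`X` and `Y`. Extremality then gives `d X + d Y < d (X \ Y) + d (Y \ X)`, contradicting
posimodularity.
-/

open Set

def Posimodular (d : Set V → ℝ) : Prop :=
  ∀ A B : Set V, d (A \ B) + d (B \ A) ≤ d A + d B

theorem IsSteinerCut.of_subset {T X Z : Set V} (hX : IsSteinerCut T X) (hZX : Z ⊆ X)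
    (hZT : (Z ∩ T).Nonempty) : IsSteinerCut T Z :=
  ⟨hZT, fun hTZ => hX.2 (hTZ.trans hZX)⟩

theorem SteinerExtreme.disjoint_diff_or_disjoint_diff {d : Set V → ℝ} {T X Y : Set V}
    (hd : Posimodular d) (hX : SteinerExtreme d T X) (hY : SteinerExtreme d T Y)
    (hXY : (X ∩ Y).Nonempty) : Disjoint (X \ Y) T ∨ Disjoint (Y \ X) T := by
  by_contra! h
  obtain ⟨hXYT, hYXT⟩ := h
  rw [not_disjoint_iff_nonempty_inter] at hXYT hYXT
  have hltX : d X < d (X \ Y) :=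
    hX.2 _ (hX.1.of_subset sdiff_subset hXYT) (sdiff_ssubset_left_iff.2 hXY)
  have hltY : d Y < d (Y \ X) :=
    hY.2 _ (hY.1.of_subset sdiff_subset hYXT) (sdiff_ssubset_left_iff.2 (inter_comm X Y ▸ hXY))
  linarith [hd X Y]

theorem extreme_inter_steinerCut_general (d : Set V → ℝ) (T X Y : Set V)
    (hpos : ∀ A B : Set V, d (A \ B) + d (B \ A) ≤ d A + d B)
    (hX : SteinerExtreme d T X) (hY : SteinerExtreme d T Y) (hne : (X ∩ Y).Nonempty) :
    IsSteinerCut T (X ∩ Y) := by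
  refine ⟨?_, fun hT => hX.1.2 (hT.trans inter_subset_left)⟩
  by_contra hXYT
  have terminal_in_diff {A B : Set V} (hA : (A ∩ T).Nonempty)
      (hAB : ¬ (A ∩ B ∩ T).Nonempty) : ¬ Disjoint (A \ B) T := by
    obtain ⟨v, hvA, hvT⟩ := hA
    exact not_disjoint_iff.2 ⟨v, ⟨hvA, fun hvB => hAB ⟨v, ⟨hvA, hvB⟩, hvT⟩⟩, hvT⟩
  rcases SteinerExtreme.disjoint_diff_or_disjoint_diff hpos hX hY hne with hdisj | hdisj
  · exact terminal_in_diff hX.1.1 hXYT hdisj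
  · exact terminal_in_diff hY.1.1 (inter_comm Y X ▸ hXYT) hdisj

/-- For extreme sets `X` and `Y` with nonempty intersection, `X ∩ Y` is a Steiner cut. -/
theorem extreme_inter_steinerCut [Fintype V] (d : Set V → ℝ) (T X Y : Set V)
    (hpos : ∀ A B : Set V, d (A \ B) + d (B \ A) ≤ d A + d B)
    (hX : SteinerExtreme d T X) (hY : SteinerExtreme d T Y) (hne : (X ∩ Y).Nonempty) :
    IsSteinerCut T (X ∩ Y) :=
  extreme_inter_steinerCut_general d T X Y hpos hX hY hne
end

section
/- If two extreme sets X and Y cross and X ∪ Y is a Steiner cut, then X ∪ Y is extreme. -/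
/-!
Two facts drive the proof. First, posimodularity forces `X ∩ Y` to contain a terminal: otherwise
`X \ Y` and `Y \ X` would be Steiner cuts strictly inside the extreme sets `X` and `Y`, so
`d (X \ Y) + d (Y \ X) > d X + d Y`. Second, for an extreme set `X` and a set `Z` with `Z ∩ X` a
Steiner cut, submodularity gives `d (Z ∪ X) ≤ d Z`, strictly unless `X ⊆ Z`. Given a Steiner cut
`Z ⊊ X ∪ Y` with a terminal in `X`, say, apply this first to `X` and `Z`, then to `Y` and `Z ∪ X`
(whose intersection with `Y` contains the terminals of `X ∩ Y`); one of the two steps is strict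
since `Z ≠ X ∪ Y`.
-/

variable {V : Type*}

open Set

variable {d : Set V → ℝ} {T X Y Z : Set V}

theorem IsSteinerCut.mono (hX : IsSteinerCut T X) (hZX : Z ⊆ X) (hZ : (Z ∩ T).Nonempty) :
    IsSteinerCut T Z :=
  ⟨hZ, fun hT => hX.2 (hT.trans hZX)⟩

namespace SteinerExtreme

theorem union_lt (hsub : ∀ A B : Set V, d (A ∩ B) + d (A ∪ B) ≤ d A + d B)
    (hX : SteinerExtreme d T X) (hZX : IsSteinerCut T (Z ∩ X)) (hXZ : ¬ X ⊆ Z) :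
    d (Z ∪ X) < d Z := by
  have hlt : d X < d (Z ∩ X) :=
    hX.2 _ hZX ⟨inter_subset_right, fun h => hXZ fun _ hx => (h hx).1⟩
  linarith [hsub Z X]

theorem union_le (hsub : ∀ A B : Set V, d (A ∩ B) + d (A ∪ B) ≤ d A + d B)
    (hX : SteinerExtreme d T X) (hZX : IsSteinerCut T (Z ∩ X)) : d (Z ∪ X) ≤ d Z := by
  by_cases hXZ : X ⊆ Z
  · rw [union_eq_self_of_subset_right hXZ]
  · exact (hX.union_lt hsub hZX hXZ).le

theorem inter_terminal_nonempty (hpos : ∀ A B : Set V, d (A \ B) + d (B \ A) ≤ d A + d B)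
    (hX : SteinerExtreme d T X) (hY : SteinerExtreme d T Y) (hXY : (X ∩ Y).Nonempty) :
    (X ∩ Y ∩ T).Nonempty := by
  by_contra hempty
  have hdiff {A B : Set V} (hA : SteinerExtreme d T A) (hAB : A ∩ B ∩ T = ∅) :
      IsSteinerCut T (A \ B) := by
    refine hA.1.mono sdiff_subset (hA.1.1.mono fun x hx => ⟨⟨hx.1, fun hxB => ?_⟩, hx.2⟩)
    exact hAB.subset ⟨⟨hx.1, hxB⟩, hx.2⟩
  have hXY' : X ∩ Y ∩ T = ∅ := not_nonempty_iff_eq_empty.mp hempty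
  have hYX' : Y ∩ X ∩ T = ∅ := by rwa [inter_comm Y X]
  have hX_lt : d X < d (X \ Y) := hX.2 _ (hdiff hX hXY') (sdiff_ssubset_left_iff.mpr hXY)
  have hY_lt : d Y < d (Y \ X) :=
    hY.2 _ (hdiff hY hYX') (sdiff_ssubset_left_iff.mpr (inter_comm X Y ▸ hXY))
  linarith [hpos X Y]

theorem union_lt_of_ssubset_union (hsub : ∀ A B : Set V, d (A ∩ B) + d (A ∪ B) ≤ d A + d B)
    (hX : SteinerExtreme d T X) (hY : SteinerExtreme d T Y) (hXYT : (X ∩ Y ∩ T).Nonempty)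
    (hXY : IsSteinerCut T (X ∪ Y)) (hZ : Z ⊂ X ∪ Y) (hZXT : (Z ∩ X ∩ T).Nonempty) :
    d (X ∪ Y) < d Z := by
  have hZX : IsSteinerCut T (Z ∩ X) :=
    hXY.mono (inter_subset_right.trans subset_union_left) (inter_assoc Z X T ▸ hZXT)
  have hZXY : IsSteinerCut T ((Z ∪ X) ∩ Y) :=
    hXY.mono (inter_subset_right.trans subset_union_right)
      (hXYT.mono fun _ h => ⟨⟨Or.inr h.1.1, h.1.2⟩, h.2⟩)
  have hunion : Z ∪ X ∪ Y = X ∪ Y := by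
    rw [union_assoc]; exact union_eq_self_of_subset_left hZ.1
  by_cases hXZ : X ⊆ Z
  · have hYZ : ¬ Y ⊆ Z := fun hYZ => hZ.2 (union_subset hXZ hYZ)
    rw [union_eq_self_of_subset_right hXZ] at hZXY hunion
    exact hunion ▸ hY.union_lt hsub hZXY hYZ
  · calc d (X ∪ Y) = d (Z ∪ X ∪ Y) := by rw [hunion]
      _ ≤ d (Z ∪ X) := hY.union_le hsub hZXY
      _ < d Z := hX.union_lt hsub hZX hXZ

end SteinerExtreme

theorem extreme_union_general (d : Set V → ℝ) (T X Y : Set V)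
    (hsub : ∀ A B : Set V, d (A ∩ B) + d (A ∪ B) ≤ d A + d B)
    (hpos : ∀ A B : Set V, d (A \ B) + d (B \ A) ≤ d A + d B)
    (hX : SteinerExtreme d T X) (hY : SteinerExtreme d T Y) (hc : Crosses X Y)
    (hXY : IsSteinerCut T (X ∪ Y)) :
    SteinerExtreme d T (X ∪ Y) := by
  have hXYT := hX.inter_terminal_nonempty hpos hY hc.1
  refine ⟨hXY, fun Z hZ hZXY => ?_⟩
  obtain ⟨t, htZ, htT⟩ := hZ.1
  rcases hZXY.1 htZ with htX | htY
  · exact hX.union_lt_of_ssubset_union hsub hY hXYT hXY hZXY ⟨t, ⟨htZ, htX⟩, htT⟩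
  · rw [union_comm] at hXY hZXY ⊢
    exact hY.union_lt_of_ssubset_union hsub hX (inter_comm X Y ▸ hXYT) hXY hZXY ⟨t, ⟨htZ, htY⟩, htT⟩

/-- If two extreme sets `X` and `Y` cross and `X ∪ Y` is a Steiner cut,
then `X ∪ Y` is extreme. -/
theorem extreme_union [Fintype V] (d : Set V → ℝ) (T X Y : Set V)
    (hsub : ∀ A B : Set V, d (A ∩ B) + d (A ∪ B) ≤ d A + d B)
    (hpos : ∀ A B : Set V, d (A \ B) + d (B \ A) ≤ d A + d B)
    (h3 : ∀ A B : Set V, d A ≤ d (A ∩ B) → d (A ∪ B) ≤ d B)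
    (h4 : ∀ A B : Set V, Crosses A B → max (d A) (d B) < d (A ∩ B) →
      d (A ∪ B) < min (d A) (d B))
    (hX : SteinerExtreme d T X) (hY : SteinerExtreme d T Y) (hc : Crosses X Y)
    (hXY : IsSteinerCut T (X ∪ Y)) :
    SteinerExtreme d T (X ∪ Y) :=
  extreme_union_general d T X Y hsub hpos hX hY hc hXY
end

section
/- For any nonempty proper subset R of T that is the projection of some extreme set, the union μ(R) of all extreme sets X with X ∩ T = R is itself an extreme set, and μ(R) ∩ T = R. -/
variable {V : Type*}

/-- The supreme set `μ(R)`: union of all extreme sets with projection `R`. -/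
def supremeSet (d : Set V → ℝ) (T R : Set V) : Set V :=
  ⋃₀ {X | SteinerExtreme d T X ∧ X ∩ T = R}

/-- Key lemma: the union of two extreme sets with the same projection `R` is
extreme with projection `R`.  Only submodularity is needed. -/
lemma union_extreme (d : Set V → ℝ) (T R X Y : Set V)
    (hsub : ∀ A B : Set V, d (A ∩ B) + d (A ∪ B) ≤ d A + d B)
    (hX : SteinerExtreme d T X) (hXR : X ∩ T = R)
    (hY : SteinerExtreme d T Y) (hYR : Y ∩ T = R) :
    SteinerExtreme d T (X ∪ Y) ∧ (X ∪ Y) ∩ T = R := by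
  have hRX : R ⊆ X := hXR ▸ Set.inter_subset_left
  have hRY : R ⊆ Y := hYR ▸ Set.inter_subset_left
  have hRT : R ⊆ T := hXR ▸ Set.inter_subset_right
  have hRne : R.Nonempty := hXR ▸ hX.1.1
  have hproj : (X ∪ Y) ∩ T = R := by
    rw [Set.union_inter_distrib_right, hXR, hYR, Set.union_self]
  have hnotT : ¬ T ⊆ X ∪ Y := by
    intro h
    apply hX.1.2
    intro t ht
    have : t ∈ (X ∪ Y) ∩ T := ⟨h ht, ht⟩
    rw [hproj] at this
    exact hRX this
  refine ⟨⟨⟨hproj ▸ hRne, hnotT⟩, ?_⟩, hproj⟩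
  intro W hW hWsub
  have hWXY : W ⊆ X ∪ Y := hWsub.1
  have hWne : W ≠ X ∪ Y := hWsub.ne
  have hWT : W ∩ T ⊆ R := by
    rw [← hproj]; exact Set.inter_subset_inter_left T hWXY
  have hWTX : W ∩ T ⊆ X := hWT.trans hRX
  -- Step 1: `Z = W ∪ X` satisfies `d Z ≤ d W`, and (`Z ≠ X ∪ Y` or `d Z < d W`)
  set Z := W ∪ X with hZdef
  have hXZ : X ⊆ Z := Set.subset_union_right
  have hZXY : Z ⊆ X ∪ Y := Set.union_subset hWXY Set.subset_union_left
  have step1 : d Z ≤ d W ∧ (Z ≠ X ∪ Y ∨ d Z < d W) := by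
    by_cases hXW : X ⊆ W
    · have hZW : Z = W := Set.union_eq_left.mpr hXW
      rw [hZW]
      exact ⟨le_refl _, Or.inl hWne⟩
    · have hWXcut : IsSteinerCut T (W ∩ X) := by
        constructor
        · obtain ⟨t, htW, htT⟩ := hW.1
          exact ⟨t, ⟨htW, hWTX ⟨htW, htT⟩⟩, htT⟩
        · intro h; exact hX.1.2 (h.trans Set.inter_subset_right)
      have hWXss : W ∩ X ⊂ X := by
        refine ⟨Set.inter_subset_right, fun h => hXW (fun x hx => ?_)⟩
        exact (h hx).1
      have h1 : d X < d (W ∩ X) := hX.2 _ hWXcut hWXss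
      have h2 := hsub W X
      have : d Z < d W := by
        have : d (W ∪ X) < d W := by linarith
        exact this
      exact ⟨le_of_lt this, Or.inr this⟩
  -- Step 2
  by_cases hYZ : Y ⊆ Z
  · have hZeq : Z = X ∪ Y := Set.Subset.antisymm hZXY (Set.union_subset hXZ hYZ)
    rcases step1.2 with h | h
    · exact absurd hZeq h
    · rw [← hZeq]; exact h
  · have hZYcut : IsSteinerCut T (Z ∩ Y) := by
      constructor
      · obtain ⟨r, hr⟩ := hRne
        exact ⟨r, ⟨hXZ (hRX hr), hRY hr⟩, hRT hr⟩
      · intro h; exact hY.1.2 (h.trans Set.inter_subset_right)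
    have hZYss : Z ∩ Y ⊂ Y := by
      refine ⟨Set.inter_subset_right, fun h => hYZ (fun y hy => ?_)⟩
      exact (h hy : y ∈ Z ∩ Y).1
    have h1 : d Y < d (Z ∩ Y) := hY.2 _ hZYcut hZYss
    have h2 := hsub Z Y
    have hZY : Z ∪ Y = X ∪ Y := by
      apply Set.Subset.antisymm (Set.union_subset hZXY Set.subset_union_right)
      exact Set.union_subset (hXZ.trans Set.subset_union_left) Set.subset_union_right
    rw [hZY] at h2
    have := step1.1
    linarith

/-- A property closed under binary unions holds for the union of a nonempty
finite family each of whose members has the property. -/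
lemma sUnion_prop {P : Set V → Prop} (hP : ∀ X Y, P X → P Y → P (X ∪ Y)) :
    ∀ S : Set (Set V), S.Finite → S.Nonempty → (∀ X ∈ S, P X) → P (⋃₀ S) := by
  intro S hS
  refine Set.Finite.induction_on
    (motive := fun S _ => S.Nonempty → (∀ X ∈ S, P X) → P (⋃₀ S)) S hS ?_ ?_
  · intro h _; exact absurd h (by simp)
  · intro a s ha hs ih hne hmem
    rw [Set.sUnion_insert]
    rcases s.eq_empty_or_nonempty with rfl | hsne
    · simpa using hmem a (by simp)
    · exact hP _ _ (hmem a (by simp))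
        (ih hsne fun X hX => hmem X (Set.mem_insert_iff.mpr (Or.inr hX)))

/-- If `R` is the projection of some extreme set, then `μ(R)` is extreme and
has projection `R`. -/
theorem supremeSet_extreme [Fintype V] (d : Set V → ℝ) (T R : Set V)
    (hsub : ∀ A B : Set V, d (A ∩ B) + d (A ∪ B) ≤ d A + d B)
    (hpos : ∀ A B : Set V, d (A \ B) + d (B \ A) ≤ d A + d B)
    (h4 : ∀ A B : Set V, Crosses A B → max (d A) (d B) < d (A ∩ B) →
      d (A ∪ B) < min (d A) (d B))
    (hR : ∃ X, SteinerExtreme d T X ∧ X ∩ T = R) :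
    SteinerExtreme d T (supremeSet d T R) ∧ supremeSet d T R ∩ T = R := by
  obtain ⟨X0, hX0⟩ := hR
  exact sUnion_prop
    (P := fun X => SteinerExtreme d T X ∧ X ∩ T = R)
    (fun X Y hX hY => union_extreme d T R X Y hsub hX.1 hX.2 hY.1 hY.2)
    _ (Set.toFinite _) ⟨X0, hX0⟩ (fun X hX => hX)
end

section
/- Every supreme set X = μ(R) is the unique minimal minimum cut separating R from T\R: X is an R-(T\R) minimum cut, and the R-side S of the earliest (inclusion-minimal among minimum) R-(T\R) minimum cut equals X. -/
variable {V : Type*}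

/-- An `A`-`B` cut (the `A`-side). -/
def IsABCut (A B S : Set V) : Prop := A ⊆ S ∧ S ∩ B = ∅

def IsABMinCut (d : Set V → ℝ) (A B S : Set V) : Prop :=
  IsABCut A B S ∧ ∀ S', IsABCut A B S' → d S ≤ d S'

/-- The earliest (inclusion-wise minimal) `A`-`B` min cut. -/
def IsEarliestABMinCut (d : Set V → ℝ) (A B S : Set V) : Prop :=
  IsABMinCut d A B S ∧ ∀ S', IsABMinCut d A B S' → S ⊆ S'

/-- Every supreme set `μ(R)` equals the earliest `R`-`(T \ R)` min cut. -/
theorem supremeSet_eq_earliest_minCut [Fintype V] (d : Set V → ℝ) (T R S : Set V)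
    (hsub : ∀ A B : Set V, d (A ∩ B) + d (A ∪ B) ≤ d A + d B)
    (hpos : ∀ A B : Set V, d (A \ B) + d (B \ A) ≤ d A + d B)
    (h4 : ∀ A B : Set V, Crosses A B → max (d A) (d B) < d (A ∩ B) →
      d (A ∪ B) < min (d A) (d B))
    (hR : ∃ X, SteinerExtreme d T X ∧ X ∩ T = R)
    (hS : IsEarliestABMinCut d R (T \ R) S) :
    S = supremeSet d T R := by
  classical
  obtain ⟨X0, hX0e, hX0T⟩ := hR
  have hRne : R.Nonempty := hX0T ▸ hX0e.1.1
  have hRT : R ⊆ T := by rw [← hX0T]; exact Set.inter_subset_right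
  have hRX0 : R ⊆ X0 := by rw [← hX0T]; exact Set.inter_subset_left
  have hRsubS : R ⊆ S := hS.1.1.1
  have hSdisj : S ∩ (T \ R) = ∅ := hS.1.1.2
  have hST : S ∩ T = R := by
    apply subset_antisymm
    · rintro x ⟨hxS, hxT⟩
      by_contra hxR
      have : x ∈ S ∩ (T \ R) := ⟨hxS, hxT, hxR⟩
      rw [hSdisj] at this
      exact this
    · exact Set.subset_inter hRsubS hRT
  -- every extreme set with projection R is an R-(T\R) cut
  have hcut : ∀ X : Set V, X ∩ T = R → IsABCut R (T \ R) X := by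
    intro X hXT
    refine ⟨by rw [← hXT]; exact Set.inter_subset_left, ?_⟩
    ext x
    simp only [Set.mem_inter_iff, Set.mem_diff, Set.mem_empty_iff_false, iff_false, not_and,
      and_imp]
    intro hxX hxT hxR
    exact hxR (hXT ▸ (⟨hxX, hxT⟩ : x ∈ X ∩ T))
  -- Part 1: every extreme set with projection R is contained in S
  have key1 : ∀ X : Set V, SteinerExtreme d T X → X ∩ T = R → X ⊆ S := by
    intro X hXe hXT
    have hXcut := hcut X hXT
    have hUcut : IsABCut R (T \ R) (X ∪ S) := by
      refine ⟨hRsubS.trans Set.subset_union_right, ?_⟩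
      ext x
      simp only [Set.mem_inter_iff, Set.mem_union, Set.mem_empty_iff_false, iff_false, not_and]
      rintro (hx | hx) hxTR
      · have : x ∈ X ∩ (T \ R) := ⟨hx, hxTR⟩
        rw [hXcut.2] at this; exact this
      · have : x ∈ S ∩ (T \ R) := ⟨hx, hxTR⟩
        rw [hSdisj] at this; exact this
    have hdu : d S ≤ d (X ∪ S) := hS.1.2 _ hUcut
    have hcap : d (X ∩ S) ≤ d X := by have := hsub X S; linarith
    by_contra hns
    have hss : X ∩ S ⊂ X := by
      refine ⟨Set.inter_subset_left, fun hsub' => hns fun x hx => (hsub' hx).2⟩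
    have hRX : R ⊆ X := by rw [← hXT]; exact Set.inter_subset_left
    have hSC : IsSteinerCut T (X ∩ S) := by
      refine ⟨?_, fun hT => hXe.1.2 fun x hx => (hT hx).1⟩
      obtain ⟨r, hr⟩ := hRne
      exact ⟨r, ⟨hRX hr, hRsubS hr⟩, hRT hr⟩
    exact absurd hcap (not_le.mpr (hXe.2 _ hSC hss))
  -- S is a Steiner cut with projection R
  have hTRne : (T \ R).Nonempty := by
    obtain ⟨t, htT, htX⟩ := Set.not_subset.mp hX0e.1.2
    exact ⟨t, htT, fun hr => htX (hRX0 hr)⟩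
  have hSsteiner : IsSteinerCut T S := by
    obtain ⟨r, hr⟩ := hRne
    refine ⟨⟨r, hRsubS hr, hRT hr⟩, fun hTS => ?_⟩
    obtain ⟨t, htT, htR⟩ := hTRne
    have : t ∈ S ∩ (T \ R) := ⟨hTS htT, htT, htR⟩
    rw [hSdisj] at this; exact this
  -- Part 2: S is Steiner extreme
  have hSextreme : SteinerExtreme d T S := by
    refine ⟨hSsteiner, fun Y hY hYS => ?_⟩
    by_contra hc
    push_neg at hc  -- d Y ≤ d S
    -- find an extreme Steiner cut inside Y
    set F : Set (Set V) := {Z | Z ⊆ Y ∧ IsSteinerCut T Z} with hF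
    have hYF : Y ∈ F := ⟨subset_rfl, hY⟩
    obtain ⟨Z1, hZ1F, hZ1min⟩ := Set.exists_min_image F d (Set.toFinite F) ⟨Y, hYF⟩
    set G : Set (Set V) := {Z | Z ∈ F ∧ d Z ≤ d Z1} with hG
    obtain ⟨Z, hZG, hZmin⟩ := Set.exists_min_image G Set.ncard (Set.toFinite G)
      ⟨Z1, hZ1F, le_refl _⟩
    have hZY : Z ⊆ Y := hZG.1.1
    have hZst : IsSteinerCut T Z := hZG.1.2
    have hZe : SteinerExtreme d T Z := by
      refine ⟨hZst, fun W hW hWZ => ?_⟩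
      have hWF : W ∈ F := ⟨hWZ.subset.trans hZY, hW⟩
      by_contra hc2
      push_neg at hc2
      have hWG : W ∈ G := ⟨hWF, hc2.trans hZG.2⟩
      have h1 := hZmin W hWG
      have h2 : W.ncard < Z.ncard := Set.ncard_lt_ncard hWZ (Set.toFinite Z)
      omega
    have hdZS : d Z ≤ d S := le_trans hZG.2 (le_trans (hZ1min Y hYF) hc)
    have hZTR : Z ∩ T ⊆ R := by
      rw [← hST]
      exact Set.inter_subset_inter_left _ (hZY.trans hYS.subset)
    by_cases hRR : Z ∩ T = R
    · -- Z is a min cut strictly inside S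
      have hZmc : IsABMinCut d R (T \ R) Z :=
        ⟨hcut Z hRR, fun S' hS' => hdZS.trans (hS.1.2 S' hS')⟩
      exact hYS.not_subset ((hS.2 Z hZmc).trans hZY)
    · -- Z ∩ T ⊊ R
      obtain ⟨r, hrR, hrZT⟩ := Set.exists_of_ssubset ⟨hZTR, fun h => hRR (subset_antisymm hZTR h)⟩
      have hrZ : r ∉ Z := fun h => hrZT ⟨h, hRT hrR⟩
      have hdSX0 : d S ≤ d X0 := hS.1.2 _ (hcut X0 hX0T)
      by_cases hZX0 : Z ⊆ X0
      · -- Z ⊊ X0, contradicting extremality of X0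
        have hss : Z ⊂ X0 := ⟨hZX0, fun h => hrZ (hZX0.antisymm h ▸ hRX0 hrR : r ∈ Z)⟩
        have := hX0e.2 Z hZst hss
        linarith
      · -- X0 and Z cross
        obtain ⟨t, htZ, htT⟩ := hZst.1
        have htX0 : t ∈ X0 := hRX0 (hZTR ⟨htZ, htT⟩)
        obtain ⟨z, hzZ, hzX0⟩ := Set.not_subset.mp hZX0
        have hcross : Crosses X0 Z :=
          ⟨⟨t, htX0, htZ⟩, ⟨r, hRX0 hrR, hrZ⟩, ⟨z, hzZ, hzX0⟩⟩
        have hIst : IsSteinerCut T (X0 ∩ Z) :=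
          ⟨⟨t, ⟨htX0, htZ⟩, htT⟩, fun h => hX0e.1.2 fun x hx => (h hx).1⟩
        have hss1 : X0 ∩ Z ⊂ X0 :=
          ⟨Set.inter_subset_left, fun h => hrZ (h (hRX0 hrR)).2⟩
        have hss2 : X0 ∩ Z ⊂ Z :=
          ⟨Set.inter_subset_right, fun h => hzX0 (h hzZ).1⟩
        have hd1 := hX0e.2 _ hIst hss1
        have hd2 := hZe.2 _ hIst hss2
        have hmax : max (d X0) (d Z) < d (X0 ∩ Z) := max_lt hd1 hd2
        have hmin := h4 X0 Z hcross hmax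
        have hUcut : IsABCut R (T \ R) (X0 ∪ Z) := by
          refine ⟨hRX0.trans Set.subset_union_left, ?_⟩
          ext x
          simp only [Set.mem_inter_iff, Set.mem_union, Set.mem_diff, Set.mem_empty_iff_false,
            iff_false, not_and, and_imp]
          rintro (hx | hx) hxT hxR
          · exact hxR (hX0T ▸ (⟨hx, hxT⟩ : x ∈ X0 ∩ T))
          · exact hxR (hZTR ⟨hx, hxT⟩)
        have hdS : d S ≤ d (X0 ∪ Z) := hS.1.2 _ hUcut
        have : min (d X0) (d Z) ≤ d Z := min_le_right _ _
        linarith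
  -- conclude
  apply subset_antisymm
  · exact Set.subset_sUnion_of_mem ⟨hSextreme, hST⟩
  · exact Set.sUnion_subset fun X hX => key1 X hX.1 hX.2
end

section
/- If X is a cut threshold set ct(s, φ) and Y is an extreme set, then either Y\X contains no terminal, or X∩Y = ∅, or X\Y = ∅. -/
variable {V : Type*}

/-- `S` is (the `t`-side of) an `s`-`t` cut. -/
def IsStCut (s t : V) (S : Set V) : Prop := t ∈ S ∧ s ∉ S

/-- The cut threshold `ct(s, φ) = {t : λ(s,t) ≥ φ} ∪ {s}`. -/
def cutThreshold (lam : V → V → ℝ) (s : V) (φ : ℝ) : Set V :=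
  {t | φ ≤ lam s t} ∪ {s}

/-! Let `t ∈ (Y \ X) ∩ T` and let `S` be a minimum `s`-`t` cut, with `t ∈ S`. Since
`d S = λ(s,t) < φ`, the cut `S` avoids `X = ct(s, φ)`; if `X ∩ Y ≠ ∅` then `Y ∩ S` is a proper
Steiner subset of `Y`, so extremality and the uncrossing property give `d (Y ∪ S) < d S`.
If `s ∉ Y`, then `Y ∪ S` is an `s`-`t` cut cheaper than the minimum one; if `s ∈ Y` and
`v ∈ X \ Y`, then `Y ∪ S` separates `s` from `v` at cost below `φ ≤ λ(s,v)`. -/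

theorem SteinerExtreme.lt_inter {d : Set V → ℝ} {T Y S : Set V} (hY : SteinerExtreme d T Y)
    (hT : (Y ∩ S ∩ T).Nonempty) (hYS : ¬ Y ⊆ S) : d Y < d (Y ∩ S) :=
  hY.2 _ ⟨hT, fun h => hY.1.2 (h.trans Set.inter_subset_left)⟩
    ⟨Set.inter_subset_left, fun h => hYS (h.trans Set.inter_subset_right)⟩

section MinCut

variable {d : Set V → ℝ} {lam : V → V → ℝ} {s : V}

theorem disjoint_cutThreshold (hlam_lb : ∀ t S, IsStCut s t S → lam s t ≤ d S) {S : Set V}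
    {φ : ℝ} (hs : s ∉ S) (hdS : d S < φ) : Disjoint S (cutThreshold lam s φ) := by
  refine Set.disjoint_left.2 fun t htS htX => htX.elim (fun ht => ?_) fun ht => hs (ht ▸ htS)
  linarith [hlam_lb t S ⟨htS, hs⟩, show φ ≤ lam s t from ht]

theorem lam_le_of_mem_of_notMem (hlam_lb : ∀ t S, IsStCut s t S → lam s t ≤ d S)
    (hsymm : ∀ A : Set V, d Aᶜ = d A) {A : Set V} {t : V} (hs : s ∈ A) (ht : t ∉ A) :
    lam s t ≤ d A :=
  hsymm A ▸ hlam_lb t Aᶜ ⟨ht, not_not_intro hs⟩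

end MinCut

theorem cutThreshold_uncross_terminal_general (d : Set V → ℝ) (T : Set V)
    (lam : V → V → ℝ) (s : V) (φ : ℝ) (Y : Set V)
    (hsymm : ∀ A : Set V, d Aᶜ = d A)
    (hlam_lb : ∀ t S, IsStCut s t S → lam s t ≤ d S)
    (hlam_att : ∀ t, t ≠ s → ∃ S, IsStCut s t S ∧ d S = lam s t)
    (h4 : ∀ A B : Set V, d A < d (A ∩ B) → d (A ∪ B) < d B)
    (hY : SteinerExtreme d T Y) :
    (Y \ cutThreshold lam s φ) ∩ T = ∅ ∨
      cutThreshold lam s φ ∩ Y = ∅ ∨ cutThreshold lam s φ \ Y = ∅ := by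
  by_contra! h
  obtain ⟨⟨t, ⟨htY, htX⟩, htT⟩, ⟨u, huX, huY⟩, ⟨v, hvX, hvY⟩⟩ := h
  have hlt : lam s t < φ := lt_of_not_ge fun h => htX (Or.inl h)
  obtain ⟨S, hS, hdS⟩ := hlam_att t fun h => htX (Or.inr h)
  have hdisj := disjoint_cutThreshold hlam_lb hS.2 (hdS ▸ hlt)
  have hunion : d (Y ∪ S) < lam s t := hdS ▸ h4 Y S
    (hY.lt_inter ⟨t, ⟨htY, hS.1⟩, htT⟩ fun h => Set.disjoint_left.1 hdisj (h huY) huX)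
  by_cases hsY : s ∈ Y
  · have hv : φ ≤ lam s v := hvX.resolve_right fun h => hvY (h ▸ hsY)
    have hvYS : v ∉ Y ∪ S := fun h => h.elim hvY fun h => Set.disjoint_left.1 hdisj h hvX
    linarith [lam_le_of_mem_of_notMem hlam_lb hsymm (Set.mem_union_left S hsY) hvYS]
  · have hsYS : s ∉ Y ∪ S := fun h => h.elim hsY hS.2
    linarith [hlam_lb t _ ⟨Or.inl htY, hsYS⟩]

/-- For any cut threshold `X = ct(s, φ)` and extreme set `Y`, either `Y \ X`
contains no terminal, or `X ∩ Y = ∅`, or `X \ Y = ∅`. -/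
theorem cutThreshold_uncross_terminal [Fintype V] (d : Set V → ℝ) (T : Set V)
    (lam : V → V → ℝ) (s : V) (φ : ℝ) (Y : Set V)
    (hsymm : ∀ A : Set V, d Aᶜ = d A)
    (hlam_lb : ∀ t S, IsStCut s t S → lam s t ≤ d S)
    (hlam_att : ∀ t, t ≠ s → ∃ S, IsStCut s t S ∧ d S = lam s t)
    (hlam_uniq : ∀ t, t ≠ s → ∃! S, IsStCut s t S ∧ d S = lam s t)
    (h4 : ∀ A B : Set V, d A < d (A ∩ B) → d (A ∪ B) < d B)
    (hY : SteinerExtreme d T Y) :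
    (Y \ cutThreshold lam s φ) ∩ T = ∅ ∨
      cutThreshold lam s φ ∩ Y = ∅ ∨ cutThreshold lam s φ \ Y = ∅ :=
  cutThreshold_uncross_terminal_general d T lam s φ Y hsymm hlam_lb hlam_att h4 hY
end

section
/- Any inclusion-minimal Steiner minimum cut X is a maximal supreme set: X is extreme, X has no extreme proper superset, and X = μ(X∩T). -/
/-! An inclusion-minimal Steiner min cut `X` is extreme, since a Steiner cut properly inside it
has larger value, and no extreme set properly contains it, since that set would have smaller
value than the minimum. If an extreme set `Z` with the same terminals were not inside `X`, then
`X` and `Z` would cross (their intersection meets `T`), both would be strictly below `d (X ∩ Z)`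
by extremeness, and the crossing inequality would push the Steiner cut `X ∪ Z` below `d X`. -/

variable {V : Type*}

/-- A Steiner min cut: a Steiner cut of minimum cut value. -/
def IsSteinerMinCut (d : Set V → ℝ) (T X : Set V) : Prop :=
  IsSteinerCut T X ∧ ∀ Y, IsSteinerCut T Y → d X ≤ d Y

section

variable {d : Set V → ℝ} {T X Y Z : Set V}

lemma IsSteinerCut.inter_of_inter_eq (hX : IsSteinerCut T X) (h : X ∩ T = Z ∩ T) :
    IsSteinerCut T (X ∩ Z) := by
  refine ⟨?_, fun hT => hX.2 (hT.trans Set.inter_subset_left)⟩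
  obtain ⟨x, hx⟩ := hX.1
  exact ⟨x, ⟨hx.1, (h ▸ hx).1⟩, hx.2⟩

lemma IsSteinerCut.union_of_inter_eq (hX : IsSteinerCut T X) (h : X ∩ T = Z ∩ T) :
    IsSteinerCut T (X ∪ Z) := by
  refine ⟨hX.1.mono (Set.inter_subset_inter_left T Set.subset_union_left), fun hT => hX.2 ?_⟩
  intro t ht
  rcases hT ht with htX | htZ
  · exact htX
  · exact (h.superset ⟨htZ, ht⟩).1

lemma crosses_of_inter_eq (hX : (X ∩ T).Nonempty) (h : X ∩ T = Z ∩ T) (hXZ : ¬ X ⊆ Z)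
    (hZX : ¬ Z ⊆ X) : Crosses X Z := by
  obtain ⟨x, hx⟩ := hX
  obtain ⟨b, hbX, hbZ⟩ := Set.not_subset.mp hXZ
  obtain ⟨a, haZ, haX⟩ := Set.not_subset.mp hZX
  exact ⟨⟨x, hx.1, (h ▸ hx).1⟩, ⟨b, hbX, hbZ⟩, ⟨a, haZ, haX⟩⟩

lemma SteinerExtreme.union_lt_of_crosses
    (hcross : ∀ A B : Set V, Crosses A B → max (d A) (d B) < d (A ∩ B) →
      d (A ∪ B) < min (d A) (d B))
    (hX : SteinerExtreme d T X) (hZ : SteinerExtreme d T Z) (h : X ∩ T = Z ∩ T)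
    (hXZ : Crosses X Z) : d (X ∪ Z) < min (d X) (d Z) := by
  obtain ⟨b, hbX, hbZ⟩ := hXZ.2.1
  obtain ⟨a, haZ, haX⟩ := hXZ.2.2
  have hI := hX.1.inter_of_inter_eq h
  have hIX : d X < d (X ∩ Z) :=
    hX.2 _ hI ⟨Set.inter_subset_left, fun hs => hbZ (hs hbX).2⟩
  have hIZ : d Z < d (X ∩ Z) :=
    hZ.2 _ hI ⟨Set.inter_subset_right, fun hs => haX (hs haZ).1⟩
  exact hcross X Z hXZ (max_lt hIX hIZ)

lemma IsSteinerMinCut.steinerExtreme (hX : IsSteinerMinCut d T X)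
    (hmin : ∀ Y, IsSteinerMinCut d T Y → Y ⊆ X → Y = X) : SteinerExtreme d T X := by
  refine ⟨hX.1, fun Y hY hYX => (hX.2 Y hY).lt_of_ne fun hXY => hYX.ne ?_⟩
  exact hmin Y ⟨hY, fun W hW => hXY ▸ hX.2 W hW⟩ hYX.subset

lemma IsSteinerMinCut.not_ssubset (hX : IsSteinerMinCut d T X) (hY : SteinerExtreme d T Y) :
    ¬ X ⊂ Y :=
  fun hXY => (hY.2 X hX.1 hXY).not_ge (hX.2 Y hY.1)

lemma IsSteinerMinCut.subset_of_steinerExtreme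
    (hcross : ∀ A B : Set V, Crosses A B → max (d A) (d B) < d (A ∩ B) →
      d (A ∪ B) < min (d A) (d B))
    (hX : IsSteinerMinCut d T X) (hXe : SteinerExtreme d T X) (hZ : SteinerExtreme d T Z)
    (h : Z ∩ T = X ∩ T) : Z ⊆ X := by
  by_contra hZX
  by_cases hXZ : X ⊆ Z
  · exact hX.not_ssubset hZ ⟨hXZ, hZX⟩
  have hU := hXe.union_lt_of_crosses hcross hZ h.symm
    (crosses_of_inter_eq hX.1.1 h.symm hXZ hZX)
  have hXU := hX.2 _ (hX.1.union_of_inter_eq h.symm)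
  linarith [min_le_left (d X) (d Z)]

end

theorem minimal_steinerMinCut_is_maximal_supreme_general (d : Set V → ℝ) (T X : Set V)
    (h4 : ∀ A B : Set V, Crosses A B → max (d A) (d B) < d (A ∩ B) →
      d (A ∪ B) < min (d A) (d B))
    (hX : IsSteinerMinCut d T X)
    (hmin : ∀ Y, IsSteinerMinCut d T Y → Y ⊆ X → Y = X) :
    SteinerExtreme d T X ∧
      (∀ Y, SteinerExtreme d T Y → X ⊂ Y → False) ∧
      X = supremeSet d T (X ∩ T) := by
  have hext := hX.steinerExtreme hmin
  refine ⟨hext, fun Y hY hXY => hX.not_ssubset hY hXY,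
    Set.Subset.antisymm (Set.subset_sUnion_of_mem ⟨hext, rfl⟩) (Set.sUnion_subset ?_)⟩
  rintro Z ⟨hZ, hZT⟩
  exact hX.subset_of_steinerExtreme h4 hext hZ hZT

/-- Any inclusion-minimal Steiner min cut `X` is a maximal supreme set:
`X` is extreme, has no extreme proper superset, and `X = μ(X ∩ T)`. -/
theorem minimal_steinerMinCut_is_maximal_supreme [Fintype V] (d : Set V → ℝ) (T X : Set V)
    (hsub : ∀ A B : Set V, d (A ∩ B) + d (A ∪ B) ≤ d A + d B)
    (hpos : ∀ A B : Set V, d (A \ B) + d (B \ A) ≤ d A + d B)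
    (h4 : ∀ A B : Set V, Crosses A B → max (d A) (d B) < d (A ∩ B) →
      d (A ∪ B) < min (d A) (d B))
    (hX : IsSteinerMinCut d T X)
    (hmin : ∀ Y, IsSteinerMinCut d T Y → Y ⊆ X → Y = X) :
    SteinerExtreme d T X ∧
      (∀ Y, SteinerExtreme d T Y → X ⊂ Y → False) ∧
      X = supremeSet d T (X ∩ T) :=
  minimal_steinerMinCut_is_maximal_supreme_general d T X h4 hX hmin
end

section
/- For any tree-representable laminar family L over V with a dummy root V, and any vertex u, let l(u) be the inclusion-minimal set in L ∪ {V} containing u. Then for any set X ∈ L and any pair u, v ∈ V, the pair (u,v) is separated by X (exactly one of u, v lies in X) if and only if X lies on the tree path from l(u) to l(v) excluding their lowest common ancestor. -/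
variable {V : Type*}

/-- A laminar family: any two members are nested or disjoint. -/
def Laminar (L : Set (Set V)) : Prop :=
  ∀ X ∈ L, ∀ Y ∈ L, X ⊆ Y ∨ Y ⊆ X ∨ Disjoint X Y

namespace Laminar

variable {L : Set (Set V)} {X Y : Set V}

theorem insert_univ (hL : Laminar L) : Laminar (insert Set.univ L) := by
  rintro X (rfl | hX) Y (rfl | hY)
  · exact Or.inl subset_rfl
  · exact Or.inr (Or.inl (Set.subset_univ Y))
  · exact Or.inl (Set.subset_univ X)
  · exact hL X hX Y hY

theorem subset_of_mem_of_notMem (hL : Laminar L) (hX : X ∈ L) (hY : Y ∈ L) {x y : V}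
    (hxX : x ∈ X) (hxY : x ∈ Y) (hyY : y ∈ Y) (hyX : y ∉ X) : X ⊆ Y := by
  rcases hL X hX Y hY with hXY | hYX | hdisj
  · exact hXY
  · exact absurd (hYX hyY) hyX
  · exact absurd hxY (hdisj.notMem_of_mem_left hxX)

theorem mem_and_notMem_iff_subset_and_ssubset (hL : Laminar L) {u v : V} {lu lv A : Set V}
    (hX : X ∈ L) (hA : A ∈ L) (hu : u ∈ lu) (hlu : ∀ B ∈ L, u ∈ B → lu ⊆ B)
    (hv : v ∈ lv) (hlv : ∀ B ∈ L, v ∈ B → lv ⊆ B) (hluA : lu ⊆ A) (hlvA : lv ⊆ A)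
    (hAmin : ∀ B ∈ L, lu ⊆ B → lv ⊆ B → A ⊆ B) :
    u ∈ X ∧ v ∉ X ↔ lu ⊆ X ∧ X ⊂ A := by
  constructor
  · rintro ⟨huX, hvX⟩
    have hXA : X ⊆ A := hL.subset_of_mem_of_notMem hX hA huX (hluA hu) (hlvA hv) hvX
    exact ⟨hlu X hX huX, hXA.ssubset_of_ne fun hXA => hvX (hXA ▸ hlvA hv)⟩
  · rintro ⟨hluX, hXA⟩
    exact ⟨hluX hu, fun hvX => hXA.not_subset (hAmin X hX hluX (hlv X hX hvX))⟩

end Laminar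

theorem laminar_separation_path_general (L : Set (Set V)) (hL : Laminar L)
    (u v : V) (lu lv A X : Set V)
    (hlu : lu ∈ insert Set.univ L ∧ u ∈ lu ∧
      ∀ B ∈ insert Set.univ L, u ∈ B → lu ⊆ B)
    (hlv : lv ∈ insert Set.univ L ∧ v ∈ lv ∧
      ∀ B ∈ insert Set.univ L, v ∈ B → lv ⊆ B)
    (hA : A ∈ insert Set.univ L ∧ lu ⊆ A ∧ lv ⊆ A ∧
      ∀ B ∈ insert Set.univ L, lu ⊆ B → lv ⊆ B → A ⊆ B)
    (hX : X ∈ L) :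
    Xor' (u ∈ X) (v ∈ X) ↔ ((lu ⊆ X ∨ lv ⊆ X) ∧ X ⊂ A) := by
  obtain ⟨-, hu, hlu⟩ := hlu
  obtain ⟨-, hv, hlv⟩ := hlv
  obtain ⟨hA, hluA, hlvA, hAmin⟩ := hA
  have hL' := hL.insert_univ
  have hX' := Set.mem_insert_of_mem Set.univ hX
  rw [Xor', or_and_right]
  exact or_congr
    (hL'.mem_and_notMem_iff_subset_and_ssubset hX' hA hu hlu hv hlv hluA hlvA hAmin)
    (hL'.mem_and_notMem_iff_subset_and_ssubset hX' hA hv hlv hu hlu hlvA hluA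
      fun B hB hlvB hluB => hAmin B hB hluB hlvB)

/-- In the inclusion tree of a laminar family `L` augmented with the dummy root
`V`, let `lu = l(u)`, `lv = l(v)` be the minimal sets containing `u`, `v`, and
`A` their LCA (the minimal common superset of `lu` and `lv` in the family).
Then an edge pair `(u, v)` is separated by `X ∈ L` iff `X` lies on the tree
path from `l(u)` to `l(v)` excluding the LCA, i.e. `X` is an ancestor of
`l(u)` or of `l(v)` that is properly below `A`. -/
theorem laminar_separation_path [Fintype V] (L : Set (Set V)) (hL : Laminar L)
    (u v : V) (lu lv A X : Set V)
    (hlu : lu ∈ insert Set.univ L ∧ u ∈ lu ∧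
      ∀ B ∈ insert Set.univ L, u ∈ B → lu ⊆ B)
    (hlv : lv ∈ insert Set.univ L ∧ v ∈ lv ∧
      ∀ B ∈ insert Set.univ L, v ∈ B → lv ⊆ B)
    (hA : A ∈ insert Set.univ L ∧ lu ⊆ A ∧ lv ⊆ A ∧
      ∀ B ∈ insert Set.univ L, lu ⊆ B → lv ⊆ B → A ⊆ B)
    (hX : X ∈ L) :
    Xor' (u ∈ X) (v ∈ X) ↔ ((lu ⊆ X ∨ lv ⊆ X) ∧ X ⊂ A) :=
  laminar_separation_path_general L hL u v lu lv A X hlu hlv hA hX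
end
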